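/- A finite word w is rich if and only if every non-empty prefix of w has a unioccurrent palindromic suffix. -/

import Mathlib

/-!
Appending a letter `a` to a word `q` creates at most one new palindromic factor: a new factor must
be a suffix of `q ++ [a]`, and of two palindromic suffixes the shorter is a prefix of the longer,
hence already a factor of `q`. So `|palFactors w| ≤ |w| + 1`, with equality iff every extension
step creates a new palindrome, and the new palindrome created at a step is exactly a palindromic
suffix of the current prefix that does not occur earlier, i.e. a unioccurrent one.
-/

/-- The finset of (distinct) palindromic factors of a finite word `w`,
including the empty word. -/
def palFactors {A : Type*} [DecidableEq A] (w : List A) : Finset (List A) :=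
  ((w.inits.flatMap List.tails).filter (fun u => u.reverse = u)).toFinset

/-- A finite word `w` is rich if it has exactly `|w| + 1` distinct palindromic factors. -/
def Rich {A : Type*} [DecidableEq A] (w : List A) : Prop :=
  (palFactors w).card = w.length + 1

/-- A non-empty word `u` is unioccurrent in `v` if there is exactly one pair of
words `(s, t)` with `v = s ++ u ++ t`. -/
def Unioccurrent {A : Type*} (u v : List A) : Prop :=
  u ≠ [] ∧ ∃! st : List A × List A, v = st.1 ++ u ++ st.2

open Finset

section Words

variable {A : Type*}

theorem isPrefix_of_isSuffix_of_reverse_eq {u v : List A} (h : u <:+ v)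
    (hu : u.reverse = u) (hv : v.reverse = v) : u <+: v := by
  simpa [hu, hv] using List.reverse_prefix.mpr h

theorem isInfix_of_palindromic_suffix_of_length_lt {q u v : List A} {a : A}
    (hu : u <:+ q ++ [a]) (hv : v <:+ q ++ [a]) (hu_pal : u.reverse = u)
    (hv_pal : v.reverse = v) (hlt : u.length < v.length) : u <:+: q := by
  obtain rfl | ⟨v', rfl, hv'⟩ := List.suffix_concat_iff.mp hv
  · simp at hlt
  have huv : u <+: v' ++ [a] :=
    isPrefix_of_isSuffix_of_reverse_eq (List.suffix_of_suffix_length_le hu hv hlt.le) hu_pal hv_pal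
  have hu' : u <+: v' :=
    (List.prefix_concat_iff.mp huv).resolve_left (by rintro rfl; simp at hlt)
  exact hu'.isInfix.trans hv'.isInfix

theorem unioccurrent_append_singleton_iff {q u : List A} {a : A} (hu : u <:+ q ++ [a]) :
    Unioccurrent u (q ++ [a]) ↔ u ≠ [] ∧ ¬ u <:+: q := by
  obtain ⟨s, hs⟩ := hu
  refine and_congr_right fun _ => ⟨?_, fun hnew => ⟨(s, []), by simp [hs], ?_⟩⟩
  · rintro ⟨st, -, huniq⟩ ⟨x, y, rfl⟩
    have hx : (x, y ++ [a]) = st := huniq _ (by simp)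
    have hs' : (s, []) = st := huniq _ (by simp [hs])
    simpa using congrArg Prod.snd (hx.trans hs'.symm)
  · rintro ⟨s', t'⟩ (heq : q ++ [a] = s' ++ u ++ t')
    obtain rfl | ⟨t, b, rfl⟩ := t'.eq_nil_or_concat
    · simp only [List.append_nil] at heq
      simp [List.append_cancel_right (hs.trans heq)]
    · rw [List.concat_eq_append, ← List.append_assoc] at heq
      exact absurd ⟨s', t, (List.append_inj' heq rfl).1.symm⟩ hnew

section PalFactors

variable [DecidableEq A]

theorem mem_palFactors {u w : List A} : u ∈ palFactors w ↔ u <:+: w ∧ u.reverse = u := by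
  simp only [palFactors, List.mem_toFinset, List.mem_filter, List.mem_flatMap,
    List.mem_inits, List.mem_tails, decide_eq_true_eq]
  constructor
  · rintro ⟨⟨p, hp, hu⟩, hr⟩
    exact ⟨hu.isInfix.trans hp.isInfix, hr⟩
  · rintro ⟨⟨s, t, rfl⟩, hr⟩
    exact ⟨⟨s ++ u, ⟨t, rfl⟩, ⟨s, rfl⟩⟩, hr⟩

theorem palFactors_nil : palFactors ([] : List A) = {[]} := by
  ext u
  simp only [mem_palFactors, List.infix_nil, mem_singleton, and_iff_left_iff_imp]
  rintro rfl
  rfl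

theorem palFactors_mono {v w : List A} (h : v <:+: w) : palFactors v ⊆ palFactors w :=
  fun _ hu => mem_palFactors.mpr ⟨(mem_palFactors.mp hu).1.trans h, (mem_palFactors.mp hu).2⟩

theorem mem_palFactors_append_singleton_sdiff {q u : List A} {a : A} :
    u ∈ palFactors (q ++ [a]) \ palFactors q ↔ u <:+ q ++ [a] ∧ u.reverse = u ∧ ¬ u <:+: q := by
  simp only [mem_sdiff, mem_palFactors, List.infix_concat_iff]
  constructor
  · rintro ⟨⟨hu | hu, hpal⟩, hnew⟩
    · exact ⟨hu, hpal, fun h => hnew ⟨h, hpal⟩⟩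
    · exact absurd ⟨hu, hpal⟩ hnew
  · rintro ⟨hu, hpal, hnew⟩
    exact ⟨⟨Or.inl hu, hpal⟩, fun h => hnew h.1⟩

theorem card_palFactors_append_singleton_sdiff_le_one (q : List A) (a : A) :
    #(palFactors (q ++ [a]) \ palFactors q) ≤ 1 := by
  rw [card_le_one]
  intro u hu v hv
  obtain ⟨hu, hu_pal, hu_new⟩ := mem_palFactors_append_singleton_sdiff.mp hu
  obtain ⟨hv, hv_pal, hv_new⟩ := mem_palFactors_append_singleton_sdiff.mp hv
  rcases lt_trichotomy u.length v.length with h | h | h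
  · exact absurd (isInfix_of_palindromic_suffix_of_length_lt hu hv hu_pal hv_pal h) hu_new
  · exact (List.suffix_of_suffix_length_le hu hv h.le).eq_of_length h
  · exact absurd (isInfix_of_palindromic_suffix_of_length_lt hv hu hv_pal hu_pal h) hv_new

theorem card_palFactors_append_singleton (q : List A) (a : A) :
    #(palFactors (q ++ [a])) = #(palFactors (q ++ [a]) \ palFactors q) + #(palFactors q) :=
  (card_sdiff_add_card_eq_card (palFactors_mono (List.prefix_append q [a]).isInfix)).symm

theorem card_palFactors_le (w : List A) : #(palFactors w) ≤ w.length + 1 := by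
  induction w using List.reverseRecOn with
  | nil => simp [palFactors_nil]
  | append_singleton q a ih =>
    have := card_palFactors_append_singleton_sdiff_le_one q a
    rw [card_palFactors_append_singleton, List.length_append, List.length_singleton]
    omega

theorem rich_append_singleton_iff (q : List A) (a : A) :
    Rich (q ++ [a]) ↔
      Rich q ∧ ∃ s : List A, s <:+ q ++ [a] ∧ s.reverse = s ∧ Unioccurrent s (q ++ [a]) := by
  have hnew : (∃ s : List A, s <:+ q ++ [a] ∧ s.reverse = s ∧ Unioccurrent s (q ++ [a])) ↔
      0 < #(palFactors (q ++ [a]) \ palFactors q) := by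
    rw [card_pos, Finset.Nonempty]
    refine exists_congr fun s => ?_
    rw [mem_palFactors_append_singleton_sdiff]
    refine ⟨fun ⟨hs, hpal, huni⟩ => ⟨hs, hpal, ((unioccurrent_append_singleton_iff hs).mp huni).2⟩,
      fun ⟨hs, hpal, hs_new⟩ => ⟨hs, hpal, (unioccurrent_append_singleton_iff hs).mpr ⟨?_, hs_new⟩⟩⟩
    rintro rfl
    exact hs_new List.nil_infix
  have := card_palFactors_append_singleton_sdiff_le_one q a
  have := card_palFactors_le q
  rw [hnew, Rich, Rich, card_palFactors_append_singleton, List.length_append,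
    List.length_singleton]
  omega

end PalFactors

end Words

/-- A finite word `w` is rich if and only if every non-empty prefix of `w` has a
unioccurrent palindromic suffix. -/
theorem rich_iff_prefixes_have_unioccurrent_pal_suffix {A : Type*} [DecidableEq A]
    (w : List A) :
    Rich w ↔ ∀ p : List A, p <+: w → p ≠ [] →
      ∃ s : List A, s <:+ p ∧ s.reverse = s ∧ Unioccurrent s p := by
  induction w using List.reverseRecOn with
  | nil => simp [Rich, palFactors_nil]
  | append_singleton q a ih =>
    rw [rich_append_singleton_iff, ih]
    constructor
    · rintro ⟨hq, hlast⟩ p hp hne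
      rcases List.prefix_concat_iff.mp hp with rfl | hp
      · exact hlast
      · exact hq p hp hne
    · intro h
      exact ⟨fun p hp => h p (hp.trans (List.prefix_append q [a])), h _ List.prefix_rfl (by simp)⟩
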